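/- arXiv:2601.18224 — 2 statements merged into one kernel-verified Lean document; each statement's English description precedes it below -/
import Mathlib

section
/- Let k_1 ≥ k_2 ≥ 1, C > 0, ε_0 ≥ 0, and δ_k = k_2/(k+k_1). If (ε_k) is a sequence of non-negative reals satisfying ε_{k+1} ≤ (1 − δ_k + C·δ_k²)·ε_k for all k, then ε_k ≤ N/(k+k_1)^{k_2} for all k, where N = ε_0 · k_1^{k_2} · exp(C·k_2²·(k_1+1)/k_1²). -/
/-!
Since `1 + x ≤ exp x`, the recursion gives `ε k ≤ ε 0 * exp (∑_{j<k} (C δ_j² - δ_j))`.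
Telescoping against `1/(j - 1 + k₁) - 1/(j + k₁)` bounds `∑ δ_j²` by `k₂² (k₁ + 1) / k₁²`,
and `log (1 + x) ≤ x` bounds `∑ δ_j` below by `k₂ log ((k + k₁) / k₁)`; finally
`exp (-k₂ log ((k + k₁) / k₁)) = (k₁ / (k + k₁)) ^ k₂`.
-/

open Real Finset

theorem le_mul_exp_sum_of_le_one_add_mul {ε a : ℕ → ℝ} (hε : ∀ k, 0 ≤ ε k)
    (hrec : ∀ k, ε (k + 1) ≤ (1 + a k) * ε k) (k : ℕ) :
    ε k ≤ ε 0 * exp (∑ j ∈ range k, a j) := by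
  induction k with
  | zero => simp
  | succ n ih =>
    calc ε (n + 1) ≤ (1 + a n) * ε n := hrec n
      _ ≤ exp (a n) * (ε 0 * exp (∑ j ∈ range n, a j)) := by
          gcongr
          · exact hε n
          · linarith [add_one_le_exp (a n)]
      _ = ε 0 * exp (∑ j ∈ range (n + 1), a j) := by
          rw [sum_range_succ, exp_add]; ring

theorem inv_sq_add_one_le_inv_sub_inv {x : ℝ} (hx : 0 < x) :
    ((x + 1) ^ 2)⁻¹ ≤ x⁻¹ - (x + 1)⁻¹ := by
  rw [inv_sub_inv hx.ne' (by positivity), add_sub_cancel_left, one_div]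
  gcongr
  nlinarith

theorem sum_range_inv_sq_add_le {a : ℝ} (ha : 0 < a) (k : ℕ) :
    ∑ j ∈ range k, (((j : ℝ) + a) ^ 2)⁻¹ ≤ (a ^ 2)⁻¹ + a⁻¹ := by
  cases k with
  | zero => rw [sum_range_zero]; positivity
  | succ k =>
    have htail : ∑ j ∈ range k, ((((j + 1 : ℕ) : ℝ) + a) ^ 2)⁻¹ ≤ a⁻¹ :=
      calc ∑ j ∈ range k, ((((j + 1 : ℕ) : ℝ) + a) ^ 2)⁻¹
          ≤ ∑ j ∈ range k, (((j : ℝ) + a)⁻¹ - (((j + 1 : ℕ) : ℝ) + a)⁻¹) := by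
            gcongr with j
            push_cast
            rw [add_right_comm]
            exact inv_sq_add_one_le_inv_sub_inv (by positivity)
        _ = a⁻¹ - ((k : ℝ) + a)⁻¹ := by
            rw [sum_range_sub' (fun j : ℕ => ((j : ℝ) + a)⁻¹)]; simp
        _ ≤ a⁻¹ := sub_le_self _ (by positivity)
    rw [sum_range_succ', Nat.cast_zero, zero_add]
    linarith

theorem log_div_le_sum_range_inv_add {a : ℝ} (ha : 0 < a) (k : ℕ) :
    log (((k : ℝ) + a) / a) ≤ ∑ j ∈ range k, ((j : ℝ) + a)⁻¹ := by
  have hpos : ∀ j : ℕ, 0 < (j : ℝ) + a := fun j => by positivity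
  calc log (((k : ℝ) + a) / a)
      = ∑ j ∈ range k, (log (((j + 1 : ℕ) : ℝ) + a) - log ((j : ℝ) + a)) := by
        rw [sum_range_sub (fun j : ℕ => log ((j : ℝ) + a)), log_div (hpos k).ne' ha.ne']
        simp
    _ ≤ ∑ j ∈ range k, ((j : ℝ) + a)⁻¹ := by
        gcongr with j
        rw [← log_div (hpos (j + 1)).ne' (hpos j).ne']
        refine (log_le_sub_one_of_pos (div_pos (hpos (j + 1)) (hpos j))).trans_eq ?_
        field_simp
        push_cast
        ring

theorem stmt_3_general (k₁ k₂ C : ℝ) (hk : 1 ≤ k₂) (hk' : k₂ ≤ k₁) (hC : 0 < C)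
    (δ ε : ℕ → ℝ) (hδ : ∀ k : ℕ, δ k = k₂ / ((k : ℝ) + k₁))
    (hεnn : ∀ k, 0 ≤ ε k)
    (hrec : ∀ k, ε (k+1) ≤ (1 - δ k + C * δ k ^ 2) * ε k)
    (N : ℝ)
    (hN : N = ε 0 * k₁ ^ k₂ * Real.exp (C * k₂ ^ 2 * (k₁ + 1) / k₁ ^ 2)) :
    ∀ k : ℕ, ε k ≤ N / ((k : ℝ) + k₁) ^ k₂ := by
  intro k
  have hk₁ : 0 < k₁ := by linarith
  have hδ' : ∀ j : ℕ, δ j = k₂ * ((j : ℝ) + k₁)⁻¹ := fun j => by rw [hδ, div_eq_mul_inv]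
  have hsum_sq : ∑ j ∈ range k, δ j ^ 2 ≤ k₂ ^ 2 * (k₁ + 1) / k₁ ^ 2 := by
    simp_rw [hδ', mul_pow, inv_pow, ← mul_sum]
    calc k₂ ^ 2 * ∑ j ∈ range k, (((j : ℝ) + k₁) ^ 2)⁻¹ ≤ k₂ ^ 2 * ((k₁ ^ 2)⁻¹ + k₁⁻¹) := by
          gcongr; exact sum_range_inv_sq_add_le hk₁ k
      _ = k₂ ^ 2 * (k₁ + 1) / k₁ ^ 2 := by field_simp; ring
  have hsum : k₂ * log (((k : ℝ) + k₁) / k₁) ≤ ∑ j ∈ range k, δ j := by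
    simp_rw [hδ', ← mul_sum]
    gcongr
    exact log_div_le_sum_range_inv_add hk₁ k
  have hpos : 0 < (k : ℝ) + k₁ := by positivity
  calc ε k ≤ ε 0 * exp (∑ j ∈ range k, (C * δ j ^ 2 - δ j)) :=
        le_mul_exp_sum_of_le_one_add_mul hεnn (fun j => by convert hrec j using 2; ring) k
    _ ≤ ε 0 * exp (C * k₂ ^ 2 * (k₁ + 1) / k₁ ^ 2 - k₂ * log (((k : ℝ) + k₁) / k₁)) := by
        gcongr ε 0 * exp ?_
        · exact hεnn 0
        rw [sum_sub_distrib, ← mul_sum, mul_assoc, mul_div_assoc]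
        gcongr
    _ = N / ((k : ℝ) + k₁) ^ k₂ := by
        rw [hN, exp_sub, mul_comm k₂, ← rpow_def_of_pos (div_pos hpos hk₁),
          div_rpow hpos.le hk₁.le]
        have : 0 < k₁ ^ k₂ := by positivity
        field_simp

/-- Polynomial decay of the optimality gap for predefined step-sizes,
case `d = 1`: `ε k ≤ N / (k + k₁) ^ k₂` with
`N = ε 0 * k₁ ^ k₂ * exp (C * k₂ ^ 2 * (k₁ + 1) / k₁ ^ 2)`. -/
theorem stmt_3 (k₁ k₂ C : ℝ) (hk : 1 ≤ k₂) (hk' : k₂ ≤ k₁) (hC : 0 < C)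
    (δ ε : ℕ → ℝ) (hδ : ∀ k : ℕ, δ k = k₂ / ((k : ℝ) + k₁))
    (hεnn : ∀ k, 0 ≤ ε k) (hε0 : 0 ≤ ε 0)
    (hrec : ∀ k, ε (k+1) ≤ (1 - δ k + C * δ k ^ 2) * ε k)
    (N : ℝ)
    (hN : N = ε 0 * k₁ ^ k₂ * Real.exp (C * k₂ ^ 2 * (k₁ + 1) / k₁ ^ 2)) :
    ∀ k : ℕ, ε k ≤ N / ((k : ℝ) + k₁) ^ k₂ :=
  stmt_3_general k₁ k₂ C hk hk' hC δ ε hδ hεnn hrec N hN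
end

section
/- Let r > 2, set ρ = 1 − 2/(r(r−1)) and let k_1 ≥ k_2 ≥ 1, C* > 0, and δ_k = k_2/(k+k_1). Suppose (ε_k) is a sequence of non-negative reals satisfying ε_{k+1} ≤ (1 − δ_k)·ε_k + C*·δ_k²·ε_k^{1−ρ} for all k ≥ 0. Let s be a real with 0 < s ≤ min{k_2, 1/ρ}, s < k_2, and let N = max{ ε_0·k_1^s, (C*·k_2²/(k_2 − s))^{1/ρ} }. Then ε_k ≤ N/(k+k_1)^s for all k ≥ 0. -/
/-!
With `t = k + k₁`, the profile `A t = N / t ^ s` is a supersolution of the recursion, which is monotone in `ε k`.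
Since `t ^ (s ρ) ≤ t` and `C* k₂² ≤ (k₂ - s) N ^ ρ`, the nonlinear term at `A t` is at most
`(k₂ - s) / t · A t`, so one step maps `A t` to at most `(1 - s / t) · A t`; and
`1 - s / t ≤ exp (-s / t) ≤ (t / (t + 1)) ^ s` turns this into `A (t + 1)`.
-/

open Real

theorem one_sub_div_le_div_add_one_rpow {s t : ℝ} (hs : 0 ≤ s) (ht : 0 < t) :
    1 - s / t ≤ (t / (t + 1)) ^ s := by
  have hlog : -(1 / t) ≤ log (t / (t + 1)) := by
    have h := one_sub_inv_le_log_of_pos (show 0 < t / (t + 1) by positivity)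
    rw [inv_div] at h
    convert h using 1
    field_simp
    ring
  calc 1 - s / t ≤ exp (s * -(1 / t)) := by
        linarith [add_one_le_exp (s * -(1 / t)), show s * -(1 / t) = -(s / t) by ring]
    _ ≤ exp (s * log (t / (t + 1))) := exp_le_exp.mpr (mul_le_mul_of_nonneg_left hlog hs)
    _ = (t / (t + 1)) ^ s := by rw [rpow_def_of_pos (by positivity), mul_comm]

theorem one_sub_div_mul_div_rpow_le {s t N : ℝ} (hs : 0 ≤ s) (ht : 0 < t) (hN : 0 ≤ N) :
    (1 - s / t) * (N / t ^ s) ≤ N / (t + 1) ^ s := by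
  have hts : 0 < t ^ s := rpow_pos_of_pos ht s
  calc (1 - s / t) * (N / t ^ s) ≤ (t / (t + 1)) ^ s * (N / t ^ s) :=
        mul_le_mul_of_nonneg_right (one_sub_div_le_div_add_one_rpow hs ht) (by positivity)
    _ = N / (t + 1) ^ s := by
        rw [div_rpow ht.le (by linarith)]
        field_simp

theorem mul_div_sq_mul_rpow_one_sub_le {C k₂ s ρ N t : ℝ} (hC : 0 ≤ C) (hsρ : s * ρ ≤ 1)
    (hN : 0 < N) (hCN : C * k₂ ^ 2 ≤ (k₂ - s) * N ^ ρ) (ht : 1 ≤ t) :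
    C * (k₂ / t) ^ 2 * (N / t ^ s) ^ (1 - ρ) ≤ (k₂ - s) / t * (N / t ^ s) := by
  have ht0 : 0 < t := by linarith
  have hA : 0 < N / t ^ s := div_pos hN (rpow_pos_of_pos ht0 s)
  have hNρ : 0 < N ^ ρ := rpow_pos_of_pos hN ρ
  have hpow : (N / t ^ s) ^ (1 - ρ) = N / t ^ s * t ^ (s * ρ) / N ^ ρ := by
    rw [rpow_sub hA, rpow_one, div_rpow hN.le (rpow_nonneg ht0.le s), ← rpow_mul ht0.le]
    field_simp
  have hts : t ^ (s * ρ) ≤ t := by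
    simpa using rpow_le_rpow_of_exponent_le ht hsρ
  rw [hpow]
  calc C * (k₂ / t) ^ 2 * (N / t ^ s * t ^ (s * ρ) / N ^ ρ)
      ≤ C * (k₂ / t) ^ 2 * (N / t ^ s * t / N ^ ρ) := by gcongr
    _ = C * k₂ ^ 2 / N ^ ρ / t * (N / t ^ s) := by field_simp
    _ ≤ (k₂ - s) / t * (N / t ^ s) := by
        gcongr
        rwa [div_le_iff₀ hNρ]

theorem recursion_step_le_div_add_one_rpow {C k₂ s ρ N t e : ℝ} (hC : 0 ≤ C) (hρ : ρ ≤ 1)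
    (hs : 0 ≤ s) (hsρ : s * ρ ≤ 1) (hN : 0 < N) (hCN : C * k₂ ^ 2 ≤ (k₂ - s) * N ^ ρ)
    (ht : 1 ≤ t) (hk₂t : k₂ ≤ t) (he : 0 ≤ e) (heA : e ≤ N / t ^ s) :
    (1 - k₂ / t) * e + C * (k₂ / t) ^ 2 * e ^ (1 - ρ) ≤ N / (t + 1) ^ s := by
  have ht0 : 0 < t := by linarith
  have hδ : 0 ≤ 1 - k₂ / t := sub_nonneg.2 ((div_le_one ht0).2 hk₂t)
  calc (1 - k₂ / t) * e + C * (k₂ / t) ^ 2 * e ^ (1 - ρ)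
      ≤ (1 - k₂ / t) * (N / t ^ s) + C * (k₂ / t) ^ 2 * (N / t ^ s) ^ (1 - ρ) := by
        gcongr
    _ ≤ (1 - k₂ / t) * (N / t ^ s) + (k₂ - s) / t * (N / t ^ s) := by
        grw [mul_div_sq_mul_rpow_one_sub_le hC hsρ hN hCN ht]
    _ = (1 - s / t) * (N / t ^ s) := by ring
    _ ≤ N / (t + 1) ^ s := one_sub_div_mul_div_rpow_le hs ht0 hN.le

/-- Polynomial decay of the optimality gap for predefined step-sizes,
case `d ≥ 2`: under `ε (k+1) ≤ (1 - δ k) * ε k + C* * δ k ^ 2 * ε k ^ (1 - ρ)`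
with `ρ = 1 - 2/(r(r-1))`, one has `ε k ≤ N / (k + k₁) ^ s`. -/
theorem stmt_4 (r ρ k₁ k₂ Cs s N : ℝ) (hr : 2 < r)
    (hρ : ρ = 1 - 2 / (r * (r - 1)))
    (hk : 1 ≤ k₂) (hk' : k₂ ≤ k₁) (hCs : 0 < Cs)
    (δ ε : ℕ → ℝ) (hδ : ∀ k : ℕ, δ k = k₂ / ((k : ℝ) + k₁))
    (hεnn : ∀ k, 0 ≤ ε k)
    (hrec : ∀ k, ε (k+1) ≤ (1 - δ k) * ε k + Cs * δ k ^ 2 * (ε k) ^ (1 - ρ))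
    (hs₁ : 0 < s) (hs₂ : s ≤ min k₂ (1 / ρ)) (hs₃ : s < k₂)
    (hN : N = max (ε 0 * k₁ ^ s) ((Cs * k₂ ^ 2 / (k₂ - s)) ^ (1 / ρ))) :
    ∀ k : ℕ, ε k ≤ N / ((k : ℝ) + k₁) ^ s := by
  have hr2 : 2 < r * (r - 1) := by nlinarith
  have hρ_pos : 0 < ρ := by
    rw [hρ, sub_pos, div_lt_one (by linarith)]
    exact hr2
  have hρ_le : ρ ≤ 1 := by
    rw [hρ]
    linarith [show 0 < 2 / (r * (r - 1)) by positivity]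
  have hsρ : s * ρ ≤ 1 := (le_div_iff₀ hρ_pos).1 (hs₂.trans (min_le_right _ _))
  have hX : 0 < Cs * k₂ ^ 2 / (k₂ - s) := div_pos (by positivity) (sub_pos.2 hs₃)
  have hN_pos : 0 < N := hN ▸ lt_max_of_lt_right (rpow_pos_of_pos hX _)
  have hCN : Cs * k₂ ^ 2 ≤ (k₂ - s) * N ^ ρ := by
    have h := (le_max_right _ _).trans hN.ge
    rw [one_div, rpow_inv_le_iff_of_pos hX.le hN_pos.le hρ_pos, div_le_iff₀ (sub_pos.2 hs₃)] at h
    linarith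
  intro k
  induction k with
  | zero =>
    rw [Nat.cast_zero, zero_add, le_div_iff₀ (rpow_pos_of_pos (by linarith) s)]
    exact (le_max_left _ _).trans hN.ge
  | succ k ih =>
    have hk₂t : k₂ ≤ (k : ℝ) + k₁ := by linarith [k.cast_nonneg (α := ℝ)]
    rw [Nat.cast_succ, add_right_comm]
    refine (hrec k).trans ?_
    rw [hδ k]
    exact recursion_step_le_div_add_one_rpow hCs.le hρ_le hs₁.le hsρ hN_pos hCN
      (hk.trans hk₂t) hk₂t (hεnn k) ih
end
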